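/- arXiv:2312.01429 — 6 statements merged into one kernel-verified Lean document; each statement's English description precedes it below -/
import Mathlib

section
/- Let d ≥ 1 and n ≥ 1, and let (x_1, y_1), …, (x_n, y_n) be a dataset with x_i ∈ ℝ^d pairwise distinct and y_i ∈ ℝ. Then there exists a two-layer ReLU network f : ℝ^d → ℝ of width 2n such that f(x_i) = y_i for every i ∈ {1, …, n}. -/
open Matrix

lemma exists_dot_ne_zero (d : ℕ) (s : Finset (Fin d → ℝ)) (hs : ∀ z ∈ s, z ≠ 0) :
    ∃ v : Fin d → ℝ, ∀ z ∈ s, z ⬝ᵥ v ≠ 0 := by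
  classical
  induction s using Finset.induction_on with
  | empty => exact ⟨0, by simp⟩
  | @insert ψ s' hmem ih =>
    obtain ⟨v, hv⟩ := ih (fun z h => hs z (Finset.mem_insert_of_mem h))
    have hψ : ψ ≠ 0 := hs ψ (Finset.mem_insert_self _ _)
    have hψψ : ψ ⬝ᵥ ψ ≠ 0 := by
      simpa [dotProduct_self_eq_zero] using hψ
    set B : Finset ℝ := (insert ψ s').image (fun z => -(z ⬝ᵥ v) / (z ⬝ᵥ ψ)) with hB
    obtain ⟨ε, hε⟩ := Finset.exists_notMem B
    refine ⟨v + ε • ψ, ?_⟩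
    intro z hz'
    have hdot : z ⬝ᵥ (v + ε • ψ) = z ⬝ᵥ v + ε * (z ⬝ᵥ ψ) := by
      simp [dotProduct_add, dotProduct_smul, smul_eq_mul, mul_comm]
    rw [hdot]
    by_cases hzψ : z ⬝ᵥ ψ = 0
    · have hzv : z ⬝ᵥ v ≠ 0 := by
        rcases Finset.mem_insert.1 hz' with rfl | h
        · exact absurd hzψ hψψ
        · exact hv z h
      simpa [hzψ] using hzv
    · intro hcon
      apply hε
      rw [hB, Finset.mem_image]
      exact ⟨z, hz', by field_simp; linarith⟩

/-- Any dataset of `n` pairwise-distinct points in `ℝ^d` with real labels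
can be interpolated by a two-layer ReLU network of width `2 * n`. -/
theorem two_layer_relu_interpolation (d n : ℕ) (hd : 1 ≤ d) (hn : 1 ≤ n)
    (x : Fin n → (Fin d → ℝ)) (y : Fin n → ℝ) (hx : Function.Injective x) :
    ∃ (a : Fin (2 * n) → ℝ) (w : Fin (2 * n) → (Fin d → ℝ)) (b : Fin (2 * n) → ℝ)
      (u : Fin d → ℝ) (c : ℝ),
      ∀ i : Fin n,
        (∑ j : Fin (2 * n), a j * max (w j ⬝ᵥ x i + b j) 0) + u ⬝ᵥ x i + c = y i := by
  classical
  obtain ⟨v, hv⟩ := exists_dot_ne_zero d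
      ((Finset.univ.offDiag).image (fun p : Fin n × Fin n => x p.1 - x p.2))
      (by
        intro z hz
        obtain ⟨p, hp, rfl⟩ := Finset.mem_image.1 hz
        have : p.1 ≠ p.2 := (Finset.mem_offDiag.1 hp).2.2
        exact sub_ne_zero.mpr (fun h => this (hx h)))
  set t : Fin n → ℝ := fun i => v ⬝ᵥ x i with ht
  have hvinj : Function.Injective t := by
    intro i j hij
    by_contra hne
    have hmem : x i - x j ∈ (Finset.univ.offDiag).image
        (fun p : Fin n × Fin n => x p.1 - x p.2) :=
      Finset.mem_image.2 ⟨(i, j), Finset.mem_offDiag.2 ⟨Finset.mem_univ _, Finset.mem_univ _, hne⟩, rfl⟩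
    have := hv _ hmem
    apply this
    have : x i ⬝ᵥ v = x j ⬝ᵥ v := by
      rw [dotProduct_comm, dotProduct_comm (x j)]; exact hij
    rw [sub_dotProduct]
    linarith
  set σ : Equiv.Perm (Fin n) := Tuple.sort t with hσ
  set s : Fin n → ℝ := t ∘ σ with hs
  have hmono : StrictMono s :=
    (Tuple.monotone_sort t).strictMono_of_injective (hvinj.comp σ.injective)
  set P : Finset (Fin n × Fin n) := Finset.univ.filter (fun p => p.1 < p.2) with hP
  set δ : ℝ := if h : P.Nonempty then P.inf' h (fun p => s p.2 - s p.1) else 1 with hδ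
  have hδpos : 0 < δ := by
    rw [hδ]
    split
    · rename_i h
      rw [Finset.lt_inf'_iff]
      intro p hp
      have : p.1 < p.2 := (Finset.mem_filter.1 hp).2
      have := hmono this
      linarith
    · norm_num
  have hδle : ∀ i j : Fin n, i < j → δ ≤ s j - s i := by
    intro i j hij
    have hmem : (i, j) ∈ P := Finset.mem_filter.2 ⟨Finset.mem_univ _, hij⟩
    rw [hδ, dif_pos ⟨(i, j), hmem⟩]
    exact Finset.inf'_le _ hmem
  set N : Matrix (Fin n) (Fin n) ℝ := fun i j => max (s i - s j + δ) 0 with hN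
  have hlow : N.BlockTriangular OrderDual.toDual := by
    intro i j hij
    have hij' : i < j := hij
    have := hδle i j hij'
    simp only [hN]
    exact max_eq_right (by linarith)
  have hdet : N.det ≠ 0 := by
    rw [Matrix.det_of_lowerTriangular N hlow]
    apply Finset.prod_ne_zero_iff.2
    intro i _
    simp only [hN, sub_self, zero_add]
    rw [max_eq_left hδpos.le]
    exact ne_of_gt hδpos
  set a' : Fin n → ℝ := N⁻¹.mulVec (fun j => y (σ j)) with ha'
  have hsol : N.mulVec a' = fun j => y (σ j) := by
    rw [ha', Matrix.mulVec_mulVec, Matrix.mul_nonsing_inv N (isUnit_iff_ne_zero.2 hdet),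
      Matrix.one_mulVec]
  refine ⟨fun k => if h : (k : ℕ) < n then a' ⟨k, h⟩ else 0, fun _ => v,
    fun k => if h : (k : ℕ) < n then δ - s ⟨k, h⟩ else 0, 0, 0, ?_⟩
  intro i
  rw [zero_dotProduct]
  have hsum : ∀ g : Fin (2 * n) → ℝ, ∑ k : Fin (2 * n), g k
      = ∑ k : Fin (n + n), g (finCongr (two_mul n).symm k) := by
    intro g
    exact (Fintype.sum_equiv (finCongr (two_mul n).symm) _ _ (fun k => rfl)).symm
  rw [hsum, Fin.sum_univ_add]
  have hzero : ∀ j : Fin n,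
      (if h : ((finCongr (two_mul n).symm (Fin.natAdd n j) : Fin (2*n)) : ℕ) < n
        then a' ⟨_, h⟩ else 0) = 0 := by
    intro j
    rw [dif_neg]
    simp [Fin.natAdd]
  have hfirst : ∀ j : Fin n,
      (if h : ((finCongr (two_mul n).symm (Fin.castAdd n j) : Fin (2*n)) : ℕ) < n
        then a' ⟨_, h⟩ else 0) = a' j ∧
      (if h : ((finCongr (two_mul n).symm (Fin.castAdd n j) : Fin (2*n)) : ℕ) < n
        then δ - s ⟨_, h⟩ else 0) = δ - s j := by
    intro j
    constructor
    · rw [dif_pos (by simp [Fin.castAdd])]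
      exact congrArg a' (Fin.ext (by simp [Fin.castAdd]))
    · rw [dif_pos (by simp [Fin.castAdd])]
      exact congrArg (fun r => δ - s r) (Fin.ext (by simp [Fin.castAdd]))
  have h1 : ∑ j : Fin n,
      (if h : ((finCongr (two_mul n).symm (Fin.natAdd n j) : Fin (2*n)) : ℕ) < n
        then a' ⟨_, h⟩ else 0) *
        max (v ⬝ᵥ x i + (if h : ((finCongr (two_mul n).symm (Fin.natAdd n j) : Fin (2*n)) : ℕ) < n
        then δ - s ⟨_, h⟩ else 0)) 0 = 0 := by
    apply Finset.sum_eq_zero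
    intro j _
    rw [hzero j, zero_mul]
  have hti : v ⬝ᵥ x i = s (σ.symm i) := by
    simp [hs, ht]
  have h2 : ∑ j : Fin n,
      (if h : ((finCongr (two_mul n).symm (Fin.castAdd n j) : Fin (2*n)) : ℕ) < n
        then a' ⟨_, h⟩ else 0) *
        max (v ⬝ᵥ x i + (if h : ((finCongr (two_mul n).symm (Fin.castAdd n j) : Fin (2*n)) : ℕ) < n
        then δ - s ⟨_, h⟩ else 0)) 0 = y i := by
    have := congrFun hsol (σ.symm i)
    simp only [Matrix.mulVec, dotProduct] at this
    calc ∑ j : Fin n, _ = ∑ j : Fin n, N (σ.symm i) j * a' j := by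
          apply Finset.sum_congr rfl
          intro j _
          rw [(hfirst j).1, (hfirst j).2, hti, mul_comm]
          simp only [hN]
          rw [show s (σ.symm i) + (δ - s j) = s (σ.symm i) - s j + δ from by ring]
      _ = y (σ (σ.symm i)) := this
      _ = y i := by rw [Equiv.apply_symm_apply]
  rw [h1, h2]
  ring
end

section
/- Let n ≥ 1 and M > 0. There exists a two-layer ReLU network f : ℝ^{n+1} → ℝ of width 2n such that for every x ∈ [0, M]^n and every integer y ∈ {1, …, n}, f(x ⊕ y) = x_y, where x ⊕ y ∈ ℝ^{n+1} denotes the vector x with the scalar y appended as the last coordinate. -/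
open Matrix

/-- There is a two-layer ReLU network `f : ℝ^{n+1} → ℝ` of width `2n` that,
given `x ∈ [0, M]^n` with an index `y ∈ {1, …, n}` appended as the last coordinate,
outputs the coordinate `x_y`. -/
theorem two_layer_relu_indexing (n : ℕ) (hn : 1 ≤ n) (M : ℝ) (hM : 0 < M) :
    ∃ (a : Fin (2 * n) → ℝ) (w : Fin (2 * n) → (Fin (n + 1) → ℝ)) (b : Fin (2 * n) → ℝ)
      (u : Fin (n + 1) → ℝ) (c : ℝ),
      ∀ (x : Fin n → ℝ), (∀ i, x i ∈ Set.Icc (0 : ℝ) M) →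
        ∀ y : Fin n,
          (∑ j : Fin (2 * n),
              a j * max (w j ⬝ᵥ Fin.snoc x (((y : ℕ) : ℝ) + 1) + b j) 0)
            + u ⬝ᵥ Fin.snoc x (((y : ℕ) : ℝ) + 1) + c = x y := by
  set K : ℝ := M + 1 with hKdef
  refine ⟨fun j => if (j : ℕ) < n then 1 else -1,
    fun j k => (if (k : ℕ) = (j : ℕ) % n then 1 else 0) + (if (k : ℕ) = n then K else 0),
    fun j => if (j : ℕ) < n then -(K * ((((j : ℕ) % n + 1 : ℕ)) : ℝ))
      else -(K * ((((j : ℕ) % n + 2 : ℕ)) : ℝ)),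
    fun k => if (k : ℕ) = n then -K else 0, K, ?_⟩
  intro x hx y
  set z : ℝ := ((y : ℕ) : ℝ) + 1 with hz
  have hdot : ∀ (m : ℕ) (hm : m < n),
      (fun k : Fin (n+1) => (if (k : ℕ) = m then (1:ℝ) else 0) + (if (k : ℕ) = n then K else 0))
        ⬝ᵥ Fin.snoc x z = x ⟨m, hm⟩ + K * z := by
    intro m hm
    have key : ∀ i : Fin n,
        ((if (i:ℕ) = m then (1:ℝ) else 0) + if (i:ℕ) = n then K else 0) * x i
          = if i = (⟨m, hm⟩ : Fin n) then x i else 0 := by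
      intro i
      rw [if_neg (Nat.ne_of_lt i.isLt), add_zero]
      by_cases h : i = ⟨m, hm⟩
      · simp [h]
      · rw [if_neg h, if_neg (fun hc => h (Fin.ext hc)), zero_mul]
    simp only [dotProduct]
    rw [Fin.sum_univ_castSucc]
    simp only [Fin.snoc_castSucc, Fin.snoc_last, Fin.coe_castSucc, Fin.val_last, key,
      Finset.sum_ite_eq' Finset.univ, Finset.mem_univ, if_true]
    rw [if_neg (Nat.ne_of_gt hm)]
    ring
  have hudot : (fun k : Fin (n+1) => if (k : ℕ) = n then -K else 0) ⬝ᵥ Fin.snoc x z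
      = -K * z := by
    have h2 : ∀ i : Fin n, ((i : ℕ) = n) = False :=
      fun i => eq_false (Nat.ne_of_lt i.isLt)
    simp only [dotProduct]
    rw [Fin.sum_univ_castSucc]
    simp only [Fin.snoc_castSucc, Fin.snoc_last, Fin.coe_castSucc, Fin.val_last, h2,
      if_false, zero_mul, Finset.sum_const_zero, if_pos rfl, zero_add, if_true]
  have hsplit : ∀ F : Fin (2 * n) → ℝ, ∑ j, F j
      = ∑ i : Fin n, (F (Fin.cast (two_mul n).symm (Fin.castAdd n i))
          + F (Fin.cast (two_mul n).symm (Fin.natAdd n i))) := by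
    intro F
    rw [← Equiv.sum_comp (finCongr (two_mul n).symm) F, Fin.sum_univ_add,
      ← Finset.sum_add_distrib]
    rfl
  rw [hsplit, hudot]
  have hterm : ∀ i : Fin n,
      (if ((Fin.cast (two_mul n).symm (Fin.castAdd n i) : Fin (2*n)) : ℕ) < n then (1:ℝ) else -1) *
          max ((fun k : Fin (n+1) =>
              (if (k:ℕ) = ((Fin.cast (two_mul n).symm (Fin.castAdd n i) : Fin (2*n)) : ℕ) % n
                then (1:ℝ) else 0)
              + (if (k:ℕ) = n then K else 0)) ⬝ᵥ Fin.snoc x z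
            + (if ((Fin.cast (two_mul n).symm (Fin.castAdd n i) : Fin (2*n)) : ℕ) < n
                then -(K * (((((Fin.cast (two_mul n).symm (Fin.castAdd n i) : Fin (2*n)) : ℕ) % n + 1 : ℕ)) : ℝ))
                else -(K * (((((Fin.cast (two_mul n).symm (Fin.castAdd n i) : Fin (2*n)) : ℕ) % n + 2 : ℕ)) : ℝ)))) 0
        + (if ((Fin.cast (two_mul n).symm (Fin.natAdd n i) : Fin (2*n)) : ℕ) < n then (1:ℝ) else -1) *
          max ((fun k : Fin (n+1) =>
              (if (k:ℕ) = ((Fin.cast (two_mul n).symm (Fin.natAdd n i) : Fin (2*n)) : ℕ) % n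
                then (1:ℝ) else 0)
              + (if (k:ℕ) = n then K else 0)) ⬝ᵥ Fin.snoc x z
            + (if ((Fin.cast (two_mul n).symm (Fin.natAdd n i) : Fin (2*n)) : ℕ) < n
                then -(K * (((((Fin.cast (two_mul n).symm (Fin.natAdd n i) : Fin (2*n)) : ℕ) % n + 1 : ℕ)) : ℝ))
                else -(K * (((((Fin.cast (two_mul n).symm (Fin.natAdd n i) : Fin (2*n)) : ℕ) % n + 2 : ℕ)) : ℝ))))  0
      = max (x i + K * z - K * (((i:ℕ) : ℝ) + 1)) 0
        - max (x i + K * z - K * (((i:ℕ) : ℝ) + 2)) 0 := by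
    intro i
    have hv1 : ((Fin.cast (two_mul n).symm (Fin.castAdd n i) : Fin (2*n)) : ℕ) = (i:ℕ) := rfl
    have hv2 : ((Fin.cast (two_mul n).symm (Fin.natAdd n i) : Fin (2*n)) : ℕ) = n + (i:ℕ) := rfl
    have hm1 : (i:ℕ) % n = (i:ℕ) := Nat.mod_eq_of_lt i.isLt
    have hm2 : (n + (i:ℕ)) % n = (i:ℕ) := by
      rw [Nat.add_mod_left]; exact Nat.mod_eq_of_lt i.isLt
    have hlt1 : (i:ℕ) < n := i.isLt
    have hlt2 : ¬ (n + (i:ℕ) < n) := by omega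
    simp only [hv1, hv2, hm1, hm2, if_pos hlt1, if_neg hlt2]
    rw [hdot (i:ℕ) i.isLt, Fin.eta]
    push_cast
    ring
  simp only [hterm]
  have hK1 : (1:ℝ) ≤ K := by rw [hKdef]; linarith
  have hptw : ∀ i : Fin n,
      max (x i + K * z - K * (((i:ℕ) : ℝ) + 1)) 0 - max (x i + K * z - K * (((i:ℕ) : ℝ) + 2)) 0
        = (if (i:ℕ) < (y:ℕ) then K else if (i:ℕ) = (y:ℕ) then x y else 0) := by
    intro i
    obtain ⟨hx0, hxM⟩ := hx i
    obtain ⟨hy0, hyM⟩ := hx y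
    rcases lt_trichotomy (i:ℕ) (y:ℕ) with h | h | h
    · have hc : ((i:ℕ) : ℝ) + 1 ≤ ((y:ℕ) : ℝ) := by exact_mod_cast h
      rw [if_pos h, hz, max_eq_left, max_eq_left] <;> nlinarith
    · have hi : i = y := Fin.ext h
      have hc : ((i:ℕ) : ℝ) = ((y:ℕ) : ℝ) := by exact_mod_cast h
      rw [if_neg (by omega : ¬ (i:ℕ) < (y:ℕ)), if_pos h, hz, hi,
        max_eq_left, max_eq_right] <;> nlinarith
    · have hc : ((y:ℕ) : ℝ) + 1 ≤ ((i:ℕ) : ℝ) := by exact_mod_cast h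
      rw [if_neg (by omega : ¬ (i:ℕ) < (y:ℕ)), if_neg (by omega : ¬ (i:ℕ) = (y:ℕ)),
        hz, max_eq_right, max_eq_right] <;> nlinarith
  simp only [hptw]
  have hsum : (∑ i : Fin n, if (i:ℕ) < (y:ℕ) then K else if (i:ℕ) = (y:ℕ) then x y else 0)
      = ((y:ℕ) : ℝ) * K + x y := by
    rw [Fin.sum_univ_eq_sum_range
      (fun i => if i < (y:ℕ) then K else if i = (y:ℕ) then x y else 0) n]
    rw [← Finset.sum_subset (Finset.range_subset_range.2 (by omega : (y:ℕ) + 1 ≤ n))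
      (fun i _ hi => by
        simp only [Finset.mem_range, not_lt] at hi
        rw [if_neg (by omega), if_neg (by omega)])]
    have h1 : ∀ i ∈ Finset.range (y:ℕ),
        (if i < (y:ℕ) then K else if i = (y:ℕ) then x y else 0) = K :=
      fun i hi => if_pos (Finset.mem_range.1 hi)
    rw [Finset.sum_range_succ, Finset.sum_congr rfl h1, Finset.sum_const,
      Finset.card_range, nsmul_eq_mul]
    simp
  rw [hsum, hz]
  ring
end

section
/- Let n, K, m ≥ 1 and M > 0. For each k ∈ {1, …, K}, let f_k : ℝ^n → ℝ be a function of the form f_k(x) = Σ_{i=1}^m a_{k,i} · ReLU(⟨w_{k,i}, x⟩ + b_{k,i}) + c_k, and suppose that 0 ≤ ⟨w_{k,i}, x⟩ + b_{k,i} ≤ M for all x ∈ [0, M]^n, all k ∈ {1, …, K}, and all i ∈ {1, …, m}. Then there exists a two-layer ReLU network f : ℝ^{n+1} → ℝ of width 2Km + K such that f(k ⊕ x) = f_k(x) for every integer k ∈ {1, …, K} and every x ∈ [0, M]^n, where k ⊕ x ∈ ℝ^{n+1} denotes the scalar k followed by the coordinates of x. -/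
open Matrix Finset

/-- Telescoping: sum of `α` over `range (k+1)` equals `d (k+1) - d k`. -/
lemma sel_step (d α : ℕ → ℝ) (h0 : α 0 = d 1 - d 0)
    (hs : ∀ j, α (j + 1) = d (j + 2) - 2 * d (j + 1) + d j) (k : ℕ) :
    ∑ j ∈ Finset.range (k + 1), α j = d (k + 1) - d k := by
  induction k with
  | zero => simpa using h0
  | succ k ih =>
      rw [Finset.sum_range_succ, ih, hs k]
      ring

lemma sel_main (d α : ℕ → ℝ) (h0 : α 0 = d 1 - d 0)
    (hs : ∀ j, α (j + 1) = d (j + 2) - 2 * d (j + 1) + d j) (k : ℕ) :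
    ∑ j ∈ Finset.range k, α j * ((k : ℝ) - j) = d k - d 0 := by
  induction k with
  | zero => simp
  | succ k ih =>
      have h1 : ∀ j ∈ Finset.range (k + 1),
          α j * (((k + 1 : ℕ) : ℝ) - j) = α j * ((k : ℝ) - j) + α j := by
        intro j _; push_cast; ring
      rw [Finset.sum_congr rfl h1, Finset.sum_add_distrib,
        Finset.sum_range_succ (f := fun j => α j * ((k : ℝ) - j)), ih,
        sel_step d α h0 hs k]
      ring

lemma pair_term (M p : ℝ) (hp0 : 0 ≤ p) (hpM : p ≤ M) (k₀ k : ℕ) :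
    max (p + M * ((k₀ : ℝ) - k)) 0 - max (p + M * ((k₀ : ℝ) - k) - M) 0
      = if k = k₀ then p else if k < k₀ then M else 0 := by
  have hM0 : (0 : ℝ) ≤ M := hp0.trans hpM
  rcases lt_trichotomy k k₀ with h | h | h
  · have h1 : (k : ℝ) + 1 ≤ k₀ := by exact_mod_cast h
    rw [if_neg (by omega), if_pos h, max_eq_left (by nlinarith), max_eq_left (by nlinarith)]
    ring
  · subst h
    rw [if_pos rfl]
    simp only [sub_self, mul_zero, add_zero]
    rw [max_eq_left hp0, max_eq_right (by linarith)]
    ring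
  · have h1 : (k₀ : ℝ) + 1 ≤ k := by exact_mod_cast h
    rw [if_neg (by omega), if_neg (by omega), max_eq_right (by nlinarith),
      max_eq_right (by nlinarith)]
    ring

noncomputable def selS (K m : ℕ) (a : Fin K → Fin m → ℝ) : ℕ → ℝ :=
  fun k => if h : k < K then ∑ i, a ⟨k, h⟩ i else 0

noncomputable def selT (K m : ℕ) (a : Fin K → Fin m → ℝ) : ℕ → ℝ :=
  fun k => ∑ j ∈ Finset.range k, selS K m a j

noncomputable def selD (K m : ℕ) (M : ℝ) (a : Fin K → Fin m → ℝ) (c : Fin K → ℝ) : ℕ → ℝ :=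
  fun k => (if h : k < K then c ⟨k, h⟩ else 0) - M * selT K m a k

noncomputable def selA (d : ℕ → ℝ) : ℕ → ℝ
  | 0 => d 1 - d 0
  | (j + 1) => d (j + 2) - 2 * d (j + 1) + d j

/-- Given `K` two-layer ReLU networks `f_k` of width `m` (with no skip
connection, i.e. `f_k(x) = Σ_i a_{k,i} ReLU(⟨w_{k,i}, x⟩ + b_{k,i}) + c_k`) whose
pre-activations lie in `[0, M]` on `[0, M]^n`, there is a single two-layer ReLU network
`f : ℝ^{n+1} → ℝ` of width `2Km + K` such that `f(k ⊕ x) = f_k(x)` for every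
`k ∈ {1, …, K}` and `x ∈ [0, M]^n`. -/
theorem two_layer_relu_selector (n K m : ℕ) (hn : 1 ≤ n) (hK : 1 ≤ K) (hm : 1 ≤ m)
    (M : ℝ) (hM : 0 < M)
    (a : Fin K → Fin m → ℝ) (w : Fin K → Fin m → (Fin n → ℝ))
    (b : Fin K → Fin m → ℝ) (c : Fin K → ℝ)
    (hpre : ∀ (x : Fin n → ℝ), (∀ i, x i ∈ Set.Icc (0 : ℝ) M) →
      ∀ (k : Fin K) (i : Fin m), w k i ⬝ᵥ x + b k i ∈ Set.Icc (0 : ℝ) M) :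
    ∃ (A : Fin (2 * K * m + K) → ℝ) (W : Fin (2 * K * m + K) → (Fin (n + 1) → ℝ))
      (B : Fin (2 * K * m + K) → ℝ) (u : Fin (n + 1) → ℝ) (C : ℝ),
      ∀ (k : Fin K) (x : Fin n → ℝ), (∀ i, x i ∈ Set.Icc (0 : ℝ) M) →
        (∑ j : Fin (2 * K * m + K),
            A j * max (W j ⬝ᵥ Fin.cons (((k : ℕ) : ℝ) + 1) x + B j) 0)
          + u ⬝ᵥ Fin.cons (((k : ℕ) : ℝ) + 1) x + C
          = (∑ i : Fin m, a k i * max (w k i ⬝ᵥ x + b k i) 0) + c k := by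
  classical
  set d : ℕ → ℝ := selD K m M a c with hd
  set α : ℕ → ℝ := selA d with hα
  have hα0 : α 0 = d 1 - d 0 := rfl
  have hαs : ∀ j, α (j + 1) = d (j + 2) - 2 * d (j + 1) + d j := fun j => rfl
  -- the index type
  have hcard : Fintype.card (Fin (2 * K * m + K))
      = Fintype.card ((Fin K × Fin m ⊕ Fin K × Fin m) ⊕ Fin K) := by
    simp [Fintype.card_sum, Fintype.card_prod]
    ring
  set e : Fin (2 * K * m + K) ≃ ((Fin K × Fin m ⊕ Fin K × Fin m) ⊕ Fin K) :=
    Fintype.equivOfCardEq hcard with he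
  set A' : ((Fin K × Fin m ⊕ Fin K × Fin m) ⊕ Fin K) → ℝ :=
    Sum.elim (Sum.elim (fun q => a q.1 q.2) (fun q => -(a q.1 q.2))) (fun j => α (j : ℕ))
    with hA'
  set W' : ((Fin K × Fin m ⊕ Fin K × Fin m) ⊕ Fin K) → (Fin (n + 1) → ℝ) :=
    Sum.elim (Sum.elim (fun q => Fin.cons M (w q.1 q.2)) (fun q => Fin.cons M (w q.1 q.2)))
      (fun _ => Fin.cons 1 0) with hW'
  set B' : ((Fin K × Fin m ⊕ Fin K × Fin m) ⊕ Fin K) → ℝ :=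
    Sum.elim
      (Sum.elim (fun q => b q.1 q.2 - M * ((q.1 : ℕ) + 1))
        (fun q => b q.1 q.2 - M * ((q.1 : ℕ) + 1) - M))
      (fun j => -(((j : ℕ) : ℝ) + 1)) with hB'
  refine ⟨fun j => A' (e j), fun j => W' (e j), fun j => B' (e j), 0, d 0, ?_⟩
  intro k₀ x hx
  set y : Fin (n + 1) → ℝ := Fin.cons (((k₀ : ℕ) : ℝ) + 1) x with hy
  have hdot : ∀ (cM : ℝ) (v : Fin n → ℝ), (Fin.cons cM v : Fin (n + 1) → ℝ) ⬝ᵥ y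
      = cM * (((k₀ : ℕ) : ℝ) + 1) + v ⬝ᵥ x :=
    fun cM v => Matrix.cons_dotProduct_cons cM v (((k₀ : ℕ) : ℝ) + 1) x
  have hsum1 : (∑ j : Fin (2 * K * m + K), A' (e j) * max (W' (e j) ⬝ᵥ y + B' (e j)) 0)
      = ∑ i : (Fin K × Fin m ⊕ Fin K × Fin m) ⊕ Fin K, A' i * max (W' i ⬝ᵥ y + B' i) 0 :=
    Equiv.sum_comp e (fun i => A' i * max (W' i ⬝ᵥ y + B' i) 0)
  rw [hsum1, Fintype.sum_sum_type, Fintype.sum_sum_type]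
  simp only [hA', hB', hW', Sum.elim_inl, Sum.elim_inr]
  rw [← Finset.sum_add_distrib]
  -- the paired sums
  have hpair : (∑ q : Fin K × Fin m,
        (a q.1 q.2 * max (Fin.cons M (w q.1 q.2) ⬝ᵥ y + (b q.1 q.2 - M * ((q.1 : ℕ) + 1))) 0 +
          -(a q.1 q.2) *
            max (Fin.cons M (w q.1 q.2) ⬝ᵥ y + (b q.1 q.2 - M * ((q.1 : ℕ) + 1) - M)) 0))
      = (∑ i : Fin m, a k₀ i * (w k₀ i ⬝ᵥ x + b k₀ i)) + M * selT K m a (k₀ : ℕ) := by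
    have hterm : ∀ q : Fin K × Fin m,
        a q.1 q.2 * max (Fin.cons M (w q.1 q.2) ⬝ᵥ y + (b q.1 q.2 - M * ((q.1 : ℕ) + 1))) 0 +
          -(a q.1 q.2) *
            max (Fin.cons M (w q.1 q.2) ⬝ᵥ y + (b q.1 q.2 - M * ((q.1 : ℕ) + 1) - M)) 0
        = a q.1 q.2 * (if (q.1 : ℕ) = (k₀ : ℕ) then w q.1 q.2 ⬝ᵥ x + b q.1 q.2
            else if (q.1 : ℕ) < (k₀ : ℕ) then M else 0) := by
      intro q
      have harg : Fin.cons M (w q.1 q.2) ⬝ᵥ y + (b q.1 q.2 - M * ((q.1 : ℕ) + 1))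
          = (w q.1 q.2 ⬝ᵥ x + b q.1 q.2) + M * (((k₀ : ℕ) : ℝ) - ((q.1 : ℕ) : ℝ)) := by
        rw [hdot M (w q.1 q.2)]; ring
      have harg2 : Fin.cons M (w q.1 q.2) ⬝ᵥ y + (b q.1 q.2 - M * ((q.1 : ℕ) + 1) - M)
          = (w q.1 q.2 ⬝ᵥ x + b q.1 q.2) + M * (((k₀ : ℕ) : ℝ) - ((q.1 : ℕ) : ℝ)) - M := by
        rw [hdot M (w q.1 q.2)]; ring
      rw [harg, harg2]
      have hpq := hpre x hx q.1 q.2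
      have := pair_term M (w q.1 q.2 ⬝ᵥ x + b q.1 q.2) hpq.1 hpq.2 (k₀ : ℕ) (q.1 : ℕ)
      calc a q.1 q.2 * max ((w q.1 q.2 ⬝ᵥ x + b q.1 q.2) + M * (((k₀ : ℕ) : ℝ) - ((q.1 : ℕ) : ℝ))) 0
            + -(a q.1 q.2) *
              max ((w q.1 q.2 ⬝ᵥ x + b q.1 q.2) + M * (((k₀ : ℕ) : ℝ) - ((q.1 : ℕ) : ℝ)) - M) 0
          = a q.1 q.2 *
              (max ((w q.1 q.2 ⬝ᵥ x + b q.1 q.2) + M * (((k₀ : ℕ) : ℝ) - ((q.1 : ℕ) : ℝ))) 0 -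
                max ((w q.1 q.2 ⬝ᵥ x + b q.1 q.2) + M * (((k₀ : ℕ) : ℝ) - ((q.1 : ℕ) : ℝ)) - M) 0) := by
            ring
        _ = _ := by rw [this]
    rw [Finset.sum_congr rfl (fun q _ => hterm q), Fintype.sum_prod_type]
    have hkterm : ∀ k : Fin K,
        (∑ i : Fin m, a k i * (if (k : ℕ) = (k₀ : ℕ) then w k i ⬝ᵥ x + b k i
            else if (k : ℕ) < (k₀ : ℕ) then M else 0))
        = (if k = k₀ then ∑ i : Fin m, a k₀ i * (w k₀ i ⬝ᵥ x + b k₀ i) else 0) +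
          (if (k : ℕ) < (k₀ : ℕ) then M * selS K m a (k : ℕ) else 0) := by
      intro k
      rcases eq_or_ne k k₀ with rfl | hne
      · simp [lt_irrefl]
      · have hv : (k : ℕ) ≠ (k₀ : ℕ) := fun h => hne (Fin.ext h)
        rw [if_neg hne, zero_add]
        simp only [if_neg hv]
        by_cases hlt : (k : ℕ) < (k₀ : ℕ)
        · simp only [if_pos hlt]
          simp [selS, k.isLt, Finset.mul_sum, mul_comm]
        · simp [hlt]
    rw [Finset.sum_congr rfl (fun k _ => hkterm k), Finset.sum_add_distrib,
      Finset.sum_ite_eq' Finset.univ k₀, if_pos (Finset.mem_univ k₀)]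
    congr 1
    have h1 : (∑ k : Fin K, (if (k : ℕ) < (k₀ : ℕ) then M * selS K m a (k : ℕ) else 0))
        = ∑ j ∈ Finset.range K, (if j < (k₀ : ℕ) then M * selS K m a j else 0) :=
      Fin.sum_univ_eq_sum_range (fun j => if j < (k₀ : ℕ) then M * selS K m a j else 0) K
    rw [h1]
    have h2 : (∑ j ∈ Finset.range (k₀ : ℕ), (if j < (k₀ : ℕ) then M * selS K m a j else 0))
        = ∑ j ∈ Finset.range K, (if j < (k₀ : ℕ) then M * selS K m a j else 0) :=
      Finset.sum_subset (Finset.range_subset_range.mpr k₀.isLt.le)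
        (fun j _ hj => if_neg (fun hlt => hj (Finset.mem_range.mpr hlt)))
    rw [← h2, Finset.sum_congr rfl (fun j hj => if_pos (Finset.mem_range.mp hj)),
      ← Finset.mul_sum]
    rfl
  -- the selector sum
  have hsel : (∑ j : Fin K, α (j : ℕ) * max ((Fin.cons 1 0 : Fin (n + 1) → ℝ) ⬝ᵥ y +
        -(((j : ℕ) : ℝ) + 1)) 0) = d (k₀ : ℕ) - d 0 := by
    have hterm : ∀ j : Fin K,
        α (j : ℕ) * max ((Fin.cons 1 0 : Fin (n + 1) → ℝ) ⬝ᵥ y + -(((j : ℕ) : ℝ) + 1)) 0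
        = α (j : ℕ) * max (((k₀ : ℕ) : ℝ) - ((j : ℕ) : ℝ)) 0 := by
      intro j
      have : (Fin.cons 1 0 : Fin (n + 1) → ℝ) ⬝ᵥ y + -(((j : ℕ) : ℝ) + 1)
          = ((k₀ : ℕ) : ℝ) - ((j : ℕ) : ℝ) := by
        rw [hdot 1 0, zero_dotProduct]; ring
      rw [this]
    rw [Finset.sum_congr rfl (fun j _ => hterm j),
      Fin.sum_univ_eq_sum_range (fun j => α j * max (((k₀ : ℕ) : ℝ) - (j : ℝ)) 0) K]
    have h2 : (∑ j ∈ Finset.range (k₀ : ℕ), α j * max (((k₀ : ℕ) : ℝ) - (j : ℝ)) 0)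
        = ∑ j ∈ Finset.range K, α j * max (((k₀ : ℕ) : ℝ) - (j : ℝ)) 0 :=
      Finset.sum_subset (Finset.range_subset_range.mpr k₀.isLt.le)
        (fun j _ hj => by
          have hle : (k₀ : ℕ) ≤ j := le_of_not_gt (fun hlt => hj (Finset.mem_range.mpr hlt))
          rw [max_eq_right (sub_nonpos.mpr (by exact_mod_cast hle)), mul_zero])
    rw [← h2, Finset.sum_congr rfl (fun j hj => by
      rw [max_eq_left (sub_nonneg.mpr (by
        exact_mod_cast (Finset.mem_range.mp hj).le))])]
    exact sel_main d α hα0 hαs (k₀ : ℕ)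
  rw [hpair, hsel, zero_dotProduct]
  have hdk : d (k₀ : ℕ) = c k₀ - M * selT K m a (k₀ : ℕ) := by
    simp [hd, selD, k₀.isLt]
  have hmax : ∀ i : Fin m, max (w k₀ i ⬝ᵥ x + b k₀ i) 0 = w k₀ i ⬝ᵥ x + b k₀ i :=
    fun i => max_eq_left (hpre x hx k₀ i).1
  have hRHS : (∑ i : Fin m, a k₀ i * max (w k₀ i ⬝ᵥ x + b k₀ i) 0)
      = ∑ i : Fin m, a k₀ i * (w k₀ i ⬝ᵥ x + b k₀ i) :=
    Finset.sum_congr rfl (fun i _ => by rw [hmax i])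
  rw [hRHS, hdk]
  ring
end

section
/- Let d ≥ 1, let a, b, r ∈ ℝ^d with r ≠ 0, let r₀ = max{‖a‖₂, ‖b‖₂}, and let ε > 0. If ‖r‖₂ ≥ 4r₀/ε + r₀, then ‖(a + r)/‖a + r‖₂ − (b + r)/‖b + r‖₂‖₂ ≤ ε. -/
lemma unit_dir_diff_le {E : Type*} [NormedAddCommGroup E] [NormedSpace ℝ E]
    (x y : E) (hx : x ≠ 0) (hy : y ≠ 0) :
    ‖(1 / ‖x‖) • x - (1 / ‖y‖) • y‖ ≤ 2 * ‖x - y‖ / ‖x‖ := by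
  have hxp : (0:ℝ) < ‖x‖ := norm_pos_iff.mpr hx
  have hyp : (0:ℝ) < ‖y‖ := norm_pos_iff.mpr hy
  have key : (1 / ‖x‖) • x - (1 / ‖y‖) • y
      = (1 / ‖x‖) • (x - y) + (1 / ‖x‖ - 1 / ‖y‖) • y := by
    simp [smul_sub, sub_smul]
  rw [key]
  have h1 : ‖(1 / ‖x‖) • (x - y)‖ = ‖x - y‖ / ‖x‖ := by
    rw [norm_smul]
    simp [abs_of_pos hxp, div_eq_mul_inv, mul_comm]
  have h2 : ‖(1 / ‖x‖ - 1 / ‖y‖) • y‖ ≤ ‖x - y‖ / ‖x‖ := by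
    rw [norm_smul, Real.norm_eq_abs]
    have : |1 / ‖x‖ - 1 / ‖y‖| = |‖y‖ - ‖x‖| / (‖x‖ * ‖y‖) := by
      rw [div_sub_div _ _ hxp.ne' hyp.ne', abs_div, abs_of_pos (by positivity : (0:ℝ) < ‖x‖ * ‖y‖)]
      ring_nf
    rw [this]
    have hb : |‖y‖ - ‖x‖| ≤ ‖x - y‖ := by
      rw [abs_sub_comm]; exact abs_norm_sub_norm_le x y
    calc |‖y‖ - ‖x‖| / (‖x‖ * ‖y‖) * ‖y‖ = |‖y‖ - ‖x‖| / ‖x‖ := by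
          field_simp
      _ ≤ ‖x - y‖ / ‖x‖ := by gcongr
  calc ‖(1 / ‖x‖) • (x - y) + (1 / ‖x‖ - 1 / ‖y‖) • y‖
      ≤ ‖(1 / ‖x‖) • (x - y)‖ + ‖(1 / ‖x‖ - 1 / ‖y‖) • y‖ := norm_add_le _ _
    _ ≤ ‖x - y‖ / ‖x‖ + ‖x - y‖ / ‖x‖ := by rw [h1]; gcongr
    _ = 2 * ‖x - y‖ / ‖x‖ := by ring

/-- geometric lemma: If `‖r‖ ≥ 4r₀/ε + r₀` with `r₀ = max{‖a‖, ‖b‖}`,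
then the unit directions of `a + r` and `b + r` are `ε`-close. -/
theorem normalized_shift_close (d : ℕ) (hd : 1 ≤ d)
    (a b r : EuclideanSpace ℝ (Fin d)) (hr : r ≠ 0) (ε : ℝ) (hε : 0 < ε)
    (hnorm : 4 * max ‖a‖ ‖b‖ / ε + max ‖a‖ ‖b‖ ≤ ‖r‖) :
    ‖(1 / ‖a + r‖) • (a + r) - (1 / ‖b + r‖) • (b + r)‖ ≤ ε := by
  set r₀ := max ‖a‖ ‖b‖ with hr₀
  have hr₀0 : 0 ≤ r₀ := le_trans (norm_nonneg a) (le_max_left _ _)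
  rcases eq_or_lt_of_le hr₀0 with h0 | h0
  · -- r₀ = 0 : a = b = 0
    have ha : a = 0 := norm_eq_zero.mp (le_antisymm (h0 ▸ le_max_left _ _) (norm_nonneg a))
    have hb : b = 0 := norm_eq_zero.mp (le_antisymm (h0 ▸ le_max_right _ _) (norm_nonneg b))
    simp [ha, hb, hε.le]
  · have hεr : 0 < 4 * r₀ / ε := by positivity
    have hxn : 4 * r₀ / ε ≤ ‖a + r‖ := by
      have := norm_add_le (a + r) (-a)
      simp only [add_neg_cancel_comm, norm_neg] at this
      have ha : ‖a‖ ≤ r₀ := le_max_left _ _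
      linarith
    have hyn : 4 * r₀ / ε ≤ ‖b + r‖ := by
      have := norm_add_le (b + r) (-b)
      simp only [add_neg_cancel_comm, norm_neg] at this
      have hb : ‖b‖ ≤ r₀ := le_max_right _ _
      linarith
    have hx : a + r ≠ 0 := by
      intro h
      rw [h, norm_zero] at hxn
      exact absurd hxn (not_le.mpr hεr)
    have hy : b + r ≠ 0 := by
      intro h
      rw [h, norm_zero] at hyn
      exact absurd hyn (not_le.mpr hεr)
    have hkey := unit_dir_diff_le (a + r) (b + r) hx hy
    have hdiff : ‖(a + r) - (b + r)‖ ≤ 2 * r₀ := by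
      have : (a + r) - (b + r) = a - b := by abel
      rw [this]
      calc ‖a - b‖ ≤ ‖a‖ + ‖b‖ := norm_sub_le _ _
        _ ≤ r₀ + r₀ := add_le_add (le_max_left _ _) (le_max_right _ _)
        _ = 2 * r₀ := by ring
    have hxp : 0 < ‖a + r‖ := lt_of_lt_of_le hεr hxn
    refine le_trans hkey ?_
    rw [div_le_iff₀ hxp]
    calc 2 * ‖(a + r) - (b + r)‖ ≤ 2 * (2 * r₀) := by gcongr
      _ = ε * (4 * r₀ / ε) := by field_simp; ring
      _ ≤ ε * ‖a + r‖ := by gcongr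
end

section
/- Let d ≥ 1 and let x, y ∈ ℝ^d satisfy max_{1 ≤ i ≤ d} |x_i − y_i| ≤ ε for some ε ≥ 0. Then Σ_{i=1}^d | exp(x_i)/Σ_{j=1}^d exp(x_j) − exp(y_i)/Σ_{j=1}^d exp(y_j) | ≤ exp(2ε) − 1. -/
/-- If `x` and `y` differ by at most `ε` in each coordinate, then the
`ℓ₁` distance between `softmax x` and `softmax y` is at most `exp(2ε) − 1`. -/
theorem softmax_l1_lipschitz (d : ℕ) (hd : 1 ≤ d) (ε : ℝ) (hε : 0 ≤ ε)
    (x y : Fin d → ℝ) (hxy : ∀ i, |x i - y i| ≤ ε) :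
    ∑ i : Fin d,
        |Real.exp (x i) / (∑ j : Fin d, Real.exp (x j))
          - Real.exp (y i) / (∑ j : Fin d, Real.exp (y j))|
      ≤ Real.exp (2 * ε) - 1 := by
  have hne : (Finset.univ : Finset (Fin d)).Nonempty := by
    simpa [Finset.univ_nonempty_iff] using Fin.pos_iff_nonempty.mp hd
  set Sx := ∑ j : Fin d, Real.exp (x j) with hSx
  set Sy := ∑ j : Fin d, Real.exp (y j) with hSy
  have hSxpos : 0 < Sx := Finset.sum_pos (fun j _ => Real.exp_pos _) hne
  have hSypos : 0 < Sy := Finset.sum_pos (fun j _ => Real.exp_pos _) hne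
  have hxle : ∀ i, Real.exp (x i) ≤ Real.exp ε * Real.exp (y i) := by
    intro i
    rw [← Real.exp_add]
    exact Real.exp_le_exp.mpr (by have := (abs_le.mp (hxy i)).2; linarith)
  have hyle : ∀ i, Real.exp (y i) ≤ Real.exp ε * Real.exp (x i) := by
    intro i
    rw [← Real.exp_add]
    exact Real.exp_le_exp.mpr (by have := (abs_le.mp (hxy i)).1; linarith)
  have hSxle : Sx ≤ Real.exp ε * Sy := by
    rw [hSx, hSy, Finset.mul_sum]; exact Finset.sum_le_sum fun i _ => hxle i
  have hSyle : Sy ≤ Real.exp ε * Sx := by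
    rw [hSy, hSx, Finset.mul_sum]; exact Finset.sum_le_sum fun i _ => hyle i
  have hE1 : (1 : ℝ) ≤ Real.exp (2 * ε) := Real.one_le_exp (by linarith)
  have hEpos : (0 : ℝ) < Real.exp ε := Real.exp_pos _
  have hE2 : Real.exp ε * Real.exp ε = Real.exp (2 * ε) := by
    rw [← Real.exp_add]; ring_nf
  -- key per-coordinate bound
  have key : ∀ i : Fin d,
      |Real.exp (x i) / Sx - Real.exp (y i) / Sy|
        ≤ (Real.exp (2 * ε) - 1) * (Real.exp (y i) / Sy) := by
    intro i
    have hq : 0 < Real.exp (y i) / Sy := div_pos (Real.exp_pos _) hSypos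
    have hp : 0 < Real.exp (x i) / Sx := div_pos (Real.exp_pos _) hSxpos
    have hup : Real.exp (x i) / Sx ≤ Real.exp (2 * ε) * (Real.exp (y i) / Sy) := by
      rw [div_le_iff₀ hSxpos]
      have h1 : Real.exp (x i) * Sy ≤ (Real.exp ε * Real.exp (y i)) * (Real.exp ε * Sx) :=
        mul_le_mul (hxle i) hSyle (le_of_lt hSypos)
          (by positivity)
      have h2 : Real.exp (x i) * Sy ≤ Real.exp (2 * ε) * Real.exp (y i) * Sx := by
        calc Real.exp (x i) * Sy ≤ (Real.exp ε * Real.exp (y i)) * (Real.exp ε * Sx) := h1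
        _ = Real.exp (2 * ε) * Real.exp (y i) * Sx := by rw [← hE2]; ring
      calc Real.exp (x i) = (Real.exp (x i) * Sy) / Sy := by field_simp
      _ ≤ (Real.exp (2 * ε) * Real.exp (y i) * Sx) / Sy := by
          gcongr
      _ = Real.exp (2 * ε) * (Real.exp (y i) / Sy) * Sx := by ring
    have hlo : Real.exp (y i) / Sy ≤ Real.exp (2 * ε) * (Real.exp (x i) / Sx) := by
      rw [div_le_iff₀ hSypos]
      have h1 : Real.exp (y i) * Sx ≤ (Real.exp ε * Real.exp (x i)) * (Real.exp ε * Sy) :=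
        mul_le_mul (hyle i) hSxle (le_of_lt hSxpos) (by positivity)
      have h2 : Real.exp (y i) * Sx ≤ Real.exp (2 * ε) * Real.exp (x i) * Sy := by
        calc Real.exp (y i) * Sx ≤ (Real.exp ε * Real.exp (x i)) * (Real.exp ε * Sy) := h1
        _ = Real.exp (2 * ε) * Real.exp (x i) * Sy := by rw [← hE2]; ring
      calc Real.exp (y i) = (Real.exp (y i) * Sx) / Sx := by field_simp
      _ ≤ (Real.exp (2 * ε) * Real.exp (x i) * Sy) / Sx :=
          by gcongr
      _ = Real.exp (2 * ε) * (Real.exp (x i) / Sx) * Sy := by ring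
    rw [abs_le]
    constructor
    · -- q - p ≤ (E-1) q, using p ≥ q/E and E + 1/E ≥ 2 i.e. q/E ≥ (2-E) q
      nlinarith [mul_pos hq hq, sq_nonneg (Real.exp (2*ε) - 1), mul_le_mul_of_nonneg_right hlo (le_of_lt hp)]
    · linarith
  calc ∑ i : Fin d, |Real.exp (x i) / Sx - Real.exp (y i) / Sy|
      ≤ ∑ i : Fin d, (Real.exp (2 * ε) - 1) * (Real.exp (y i) / Sy) :=
        Finset.sum_le_sum fun i _ => key i
    _ = (Real.exp (2 * ε) - 1) * (Sy / Sy) := by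
        rw [← Finset.mul_sum, ← Finset.sum_div]
    _ = Real.exp (2 * ε) - 1 := by rw [div_self (ne_of_gt hSypos), mul_one]
end

section
/- Let E be a real normed vector space, let D ≥ 1, let N > 0 be a real number, and let R ≥ 0. Let v_1, …, v_D ∈ E and let m_1, …, m_D be real numbers satisfying m_{d+1} = m_d − 1 for all 1 ≤ d < D and m_D ≥ N/8. Suppose that for every d ∈ {1, …, D}, ‖ Σ_{j=1}^{d−1} v_j + m_d · v_d ‖ ≤ R. Then for every d ∈ {1, …, D−1}, ‖ v_{d+1} − v_d ‖ ≤ 16R/N. -/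
/-! Consecutive bounded expressions `S_d = Σ_{j<d} v_j + m_d v_d` differ by
`S_{d+1} - S_d = m_{d+1} (v_{d+1} - v_d)` because `m_d = m_{d+1} + 1`, so
`m_{d+1} ‖v_{d+1} - v_d‖ ≤ 2R`; and `m_{d+1} ≥ m_D ≥ N/8` since the `m_d` decrease. -/

theorem antitoneOn_Icc_of_succ_le {α : Type*} [Preorder α] {f : ℕ → α} {a b : ℕ}
    (h : ∀ n, a ≤ n → n < b → f (n + 1) ≤ f n) : AntitoneOn f (Set.Icc a b) := by
  intro x hx y hy hxy
  induction y, hxy using Nat.le_induction with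
  | base => exact le_rfl
  | succ n hxn ih =>
    exact (h n (hx.1.trans hxn) hy.2).trans (ih ⟨hx.1.trans hxn, (Nat.le_succ n).trans hy.2⟩)

theorem norm_sub_le_of_norm_add_smul_le {E : Type*} [NormedAddCommGroup E] [NormedSpace ℝ E]
    {s x y : E} {a c R : ℝ} (hc : 0 < c) (hca : c ≤ a)
    (hx : ‖s + (a + 1) • x‖ ≤ R) (hy : ‖s + x + a • y‖ ≤ R) : ‖y - x‖ ≤ 2 * R / c := by
  have hdiff : a • (y - x) = (s + x + a • y) - (s + (a + 1) • x) := by module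
  rw [le_div_iff₀' hc]
  calc c * ‖y - x‖ ≤ a * ‖y - x‖ := mul_le_mul_of_nonneg_right hca (norm_nonneg _)
    _ = ‖a • (y - x)‖ := by rw [norm_smul, Real.norm_of_nonneg (hc.le.trans hca)]
    _ ≤ ‖s + x + a • y‖ + ‖s + (a + 1) • x‖ := hdiff ▸ norm_sub_le _ _
    _ ≤ 2 * R := by linarith

theorem consecutive_close_of_bounded_partial_sums_general
    {E : Type*} [NormedAddCommGroup E] [NormedSpace ℝ E]
    (D : ℕ) (N : ℝ) (hN : 0 < N) (R : ℝ)
    (v : ℕ → E) (m : ℕ → ℝ)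
    (hm_step : ∀ d : ℕ, 1 ≤ d → d < D → m (d + 1) = m d - 1)
    (hm_last : N / 8 ≤ m D)
    (hbound : ∀ d : ℕ, 1 ≤ d → d ≤ D →
      ‖(∑ j ∈ Finset.Icc 1 (d - 1), v j) + m d • v d‖ ≤ R) :
    ∀ d : ℕ, 1 ≤ d → d ≤ D - 1 → ‖v (d + 1) - v d‖ ≤ 16 * R / N := by
  intro d hd hdD
  obtain ⟨k, rfl⟩ : ∃ k, d = k + 1 := ⟨d - 1, by omega⟩
  have hm_anti : AntitoneOn m (Set.Icc 1 D) :=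
    antitoneOn_Icc_of_succ_le fun n hn hnD => by linarith [hm_step n hn hnD]
  have hm_ge : N / 8 ≤ m (k + 2) :=
    hm_last.trans (hm_anti ⟨by omega, by omega⟩ ⟨by omega, le_rfl⟩ (by omega))
  have hm_succ : m (k + 1) = m (k + 2) + 1 := by linarith [hm_step (k + 1) hd (by omega)]
  have h₁ := hbound (k + 1) hd (by omega)
  have h₂ := hbound (k + 2) (by omega) (by omega)
  rw [Nat.add_sub_cancel, hm_succ] at h₁
  rw [show k + 2 - 1 = k + 1 by omega, Finset.sum_Icc_succ_top (by omega)] at h₂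
  calc ‖v (k + 1 + 1) - v (k + 1)‖ ≤ 2 * R / (N / 8) :=
        norm_sub_le_of_norm_add_smul_le (by positivity) hm_ge h₁ h₂
    _ = 16 * R / N := by field_simp; ring

/-- telescoping lemma: if the partial sums `Σ_{j<d} v_j + m_d • v_d` are all
bounded by `R` in norm, where the scalars `m_d` decrease by exactly 1 and `m_D ≥ N/8`, then
consecutive `v_d`'s are `16R/N`-close. -/
theorem consecutive_close_of_bounded_partial_sums
    {E : Type*} [NormedAddCommGroup E] [NormedSpace ℝ E]
    (D : ℕ) (hD : 1 ≤ D) (N : ℝ) (hN : 0 < N) (R : ℝ) (hR : 0 ≤ R)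
    (v : ℕ → E) (m : ℕ → ℝ)
    (hm_step : ∀ d : ℕ, 1 ≤ d → d < D → m (d + 1) = m d - 1)
    (hm_last : N / 8 ≤ m D)
    (hbound : ∀ d : ℕ, 1 ≤ d → d ≤ D →
      ‖(∑ j ∈ Finset.Icc 1 (d - 1), v j) + m d • v d‖ ≤ R) :
    ∀ d : ℕ, 1 ≤ d → d ≤ D - 1 → ‖v (d + 1) - v d‖ ≤ 16 * R / N :=
  consecutive_close_of_bounded_partial_sums_general D N hN R v m hm_step hm_last hbound
end
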